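/- Let G be a finite transitive directed graph with all in-degrees at least 2, v a vertex of in-degree d ≥ 3, and Ĝ_v its v-lag. Define θ on edges of G by θ(e) = e if r(e) ≠ v, and θ(e_j) = f₁f₂...f_j ê_j for the j-th edge e_j into v (the unique path in Ĝ_v from u_j to v passing only through new vertices); extend θ to paths by concatenation. Then θ is a bijection from the set of finite paths in G onto the set of finite paths in Ĝ_v whose source and range both lie in V. -/

import Mathlib

/-- Range map of the `v`-lag `Ĝ_v`.  Vertices of `Ĝ_v` are `V ⊕ Fin (d - 2)`, where
`Sum.inr i` is the new vertex `v_{i+1}`; edges are `E ⊕ Fin (d - 2)`, where `Sum.inr i`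
is the new edge `f_{i+1} : v_{i+1} → v_i` (with `v_0 := v`) and `Sum.inl e` for an old
edge `e_j` into `v` (enumerated by `enum`) is the replacement edge `ê_j`. -/
noncomputable def lagR {V E : Type*} (r : E → V) (v : V) (d : ℕ) (hd : 3 ≤ d)
    (enum : {e : E // r e = v} ≃ Fin d) :
    E ⊕ Fin (d - 2) → V ⊕ Fin (d - 2) :=
  fun x =>
    match x with
    | Sum.inl e =>
      @dite _ (r e = v) (Classical.dec _)
        (fun h =>
          if h0 : (enum ⟨e, h⟩).val = 0 then Sum.inl v
          else if h1 : (enum ⟨e, h⟩).val = d - 1 then Sum.inr ⟨d - 3, by omega⟩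
          else Sum.inr ⟨(enum ⟨e, h⟩).val - 1, by have := (enum ⟨e, h⟩).isLt; omega⟩)
        (fun _ => Sum.inl (r e))
    | Sum.inr i =>
      if h0 : i.val = 0 then Sum.inl v
      else Sum.inr ⟨i.val - 1, by have := i.isLt; omega⟩

/-- Source map of the `v`-lag `Ĝ_v`. -/
def lagS {V E : Type*} {d : ℕ} (s : E → V) :
    E ⊕ Fin (d - 2) → V ⊕ Fin (d - 2) :=
  fun x =>
    match x with
    | Sum.inl e => Sum.inl (s e)
    | Sum.inr i => Sum.inr i

/-- `θ` on a single edge: `θ(e) = e` if `r e ≠ v`, and `θ(e_j) = f₁ f₂ ... f_j ê_j`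
for the `j`-th edge `e_j` into `v` (with `θ(e_{d-1}) = f₁ ... f_{d-2} ê_{d-1}`). -/
noncomputable def thetaEdge {V E : Type*} (r : E → V) (v : V) (d : ℕ)
    (enum : {e : E // r e = v} ≃ Fin d) (e : E) : List (E ⊕ Fin (d - 2)) :=
  @dite _ (r e = v) (Classical.dec _)
    (fun h => (((List.finRange (d - 2)).take (enum ⟨e, h⟩).val).map Sum.inr) ++ [Sum.inl e])
    (fun _ => [Sum.inl e])

section Aux
set_option linter.unusedSectionVars false

variable {V E : Type*} (r s : E → V) (v : V) (d : ℕ) (hd : 3 ≤ d)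
  (enum : {e : E // r e = v} ≃ Fin d)

lemma theta_of_ne (e : E) (h : ¬ r e = v) : thetaEdge r v d enum e = [Sum.inl e] := by
  unfold thetaEdge; rw [dif_neg h]

lemma theta_of_eq (e : E) (h : r e = v) :
    thetaEdge r v d enum e =
      (((List.finRange (d - 2)).take (enum ⟨e, h⟩).val).map Sum.inr) ++ [Sum.inl e] := by
  unfold thetaEdge; rw [dif_pos h]

lemma lagS_inl (e : E) : lagS (d := d) s (Sum.inl e) = Sum.inl (s e) := rfl
lemma lagS_inr (i : Fin (d - 2)) : lagS (d := d) s (Sum.inr i) = Sum.inr i := rfl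

include hd

lemma lagR_inl_ne (e : E) (h : ¬ r e = v) :
    lagR r v d hd enum (Sum.inl e) = Sum.inl (r e) := by
  show (@dite _ (r e = v) (Classical.dec _) _ _ : V ⊕ Fin (d - 2)) = _
  rw [dif_neg h]

lemma lagR_inl_zero (e : E) (h : r e = v) (h0 : (enum ⟨e, h⟩).val = 0) :
    lagR r v d hd enum (Sum.inl e) = Sum.inl v := by
  show (@dite _ (r e = v) (Classical.dec _) _ _ : V ⊕ Fin (d - 2)) = _
  rw [dif_pos h, dif_pos h0]

lemma lagR_inl_top (e : E) (h : r e = v) (h1 : (enum ⟨e, h⟩).val = d - 1) :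
    lagR r v d hd enum (Sum.inl e) = Sum.inr ⟨d - 3, by omega⟩ := by
  show (@dite _ (r e = v) (Classical.dec _) _ _ : V ⊕ Fin (d - 2)) = _
  rw [dif_pos h, dif_neg (show ¬ (enum ⟨e, h⟩).val = 0 by omega), dif_pos h1]

lemma lagR_inl_mid (e : E) (h : r e = v) (h0 : ¬ (enum ⟨e, h⟩).val = 0)
    (h1 : ¬ (enum ⟨e, h⟩).val = d - 1) :
    lagR r v d hd enum (Sum.inl e) =
      Sum.inr ⟨(enum ⟨e, h⟩).val - 1, by have := (enum ⟨e, h⟩).isLt; omega⟩ := by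
  show (@dite _ (r e = v) (Classical.dec _) _ _ : V ⊕ Fin (d - 2)) = _
  rw [dif_pos h, dif_neg h0, dif_neg h1]

lemma lagR_inr_zero (i : Fin (d - 2)) (h0 : i.val = 0) :
    lagR r v d hd enum (Sum.inr i) = Sum.inl v := by
  show (if _ : i.val = 0 then _ else _) = _
  rw [dif_pos h0]

lemma lagR_inr_pos (i : Fin (d - 2)) (h0 : ¬ i.val = 0) :
    lagR r v d hd enum (Sum.inr i) = Sum.inr ⟨i.val - 1, by have := i.isLt; omega⟩ := by
  show (if _ : i.val = 0 then _ else _) = _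
  rw [dif_neg h0]

lemma theta_ne_nil (e : E) : thetaEdge r v d enum e ≠ [] := by
  by_cases h : r e = v
  · rw [theta_of_eq r v d enum e h]; simp
  · rw [theta_of_ne r v d enum e h]; simp

lemma theta_getLast? (e : E) :
    (thetaEdge r v d enum e).getLast? = some (Sum.inl e) := by
  by_cases h : r e = v
  · rw [theta_of_eq r v d enum e h]; simp
  · rw [theta_of_ne r v d enum e h]; simp

lemma theta_length (e : E) (h : r e = v) :
    (thetaEdge r v d enum e).length = min (enum ⟨e, h⟩).val (d - 2) + 1 := by
  rw [theta_of_eq r v d enum e h]; simp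

lemma theta_getElem (e : E) (h : r e = v) (i : ℕ)
    (hij : i < min (enum ⟨e, h⟩).val (d - 2)) (hid : i < d - 2)
    (hilen : i < (thetaEdge r v d enum e).length) :
    (thetaEdge r v d enum e)[i] = Sum.inr ⟨i, hid⟩ := by
  rw [List.getElem_of_eq (theta_of_eq r v d enum e h) hilen]
  rw [List.getElem_append_left (by simpa using hij)]
  simp [List.getElem_take, List.getElem_finRange, Fin.cast]

lemma theta_getElem_last (e : E) (h : r e = v) (i : ℕ)
    (hi : i = min (enum ⟨e, h⟩).val (d - 2))
    (hilen : i < (thetaEdge r v d enum e).length) :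
    (thetaEdge r v d enum e)[i] = Sum.inl e := by
  rw [List.getElem_of_eq (theta_of_eq r v d enum e h) hilen]
  rw [List.getElem_append_right (by simpa using hi.ge)]
  simp

lemma theta_head? (e : E) :
    (thetaEdge r v d enum e).head?.map (lagR r v d hd enum) = some (Sum.inl (r e)) := by
  by_cases h : r e = v
  · by_cases h0 : (enum ⟨e, h⟩).val = 0
    · rw [theta_of_eq r v d enum e h, h0]
      simp [lagR_inl_zero r v d hd enum e h h0, h]
    · have h1 : 0 < min (enum ⟨e, h⟩).val (d - 2) := by omega
      have hlen : 0 < (thetaEdge r v d enum e).length := by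
        rw [theta_length r v d hd enum e h]; omega
      rw [List.head?_eq_getElem?, List.getElem?_eq_getElem hlen,
        theta_getElem r v d hd enum e h 0 h1 (by omega) hlen]
      have := lagR_inr_zero r v d hd enum ⟨0, by omega⟩ rfl
      simp [this, h]
  · rw [theta_of_ne r v d enum e h]
    simp [lagR_inl_ne r v d hd enum e h]

lemma theta_chain' (e : E) :
    List.Chain' (fun x y => lagS s x = lagR r v d hd enum y) (thetaEdge r v d enum e) := by
  by_cases h : r e = v
  · unfold List.Chain'
    rw [List.isChain_iff_getElem]
    intro i hi
    have hlen : (thetaEdge r v d enum e).length = min (enum ⟨e, h⟩).val (d - 2) + 1 :=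
      theta_length r v d hd enum e h
    have hi' : i < min (enum ⟨e, h⟩).val (d - 2) := by omega
    rw [theta_getElem r v d hd enum e h i hi' (by omega) (by omega)]
    by_cases hend : i + 1 = min (enum ⟨e, h⟩).val (d - 2)
    · rw [theta_getElem_last r v d hd enum e h (i+1) hend (by omega)]
      rw [lagS_inr]
      by_cases htop : (enum ⟨e, h⟩).val = d - 1
      · rw [lagR_inl_top r v d hd enum e h htop]
        have : min (enum ⟨e, h⟩).val (d - 2) = d - 2 := by omega
        congr 1; apply Fin.ext; simp only []; omega
      · have h0 : ¬ (enum ⟨e, h⟩).val = 0 := by omega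
        rw [lagR_inl_mid r v d hd enum e h h0 htop]
        have hle : (enum ⟨e, h⟩).val ≤ d - 2 := by
          have := (enum ⟨e, h⟩).isLt; omega
        congr 1; apply Fin.ext; simp only []; omega
    · rw [theta_getElem r v d hd enum e h (i+1) (by omega) (by omega) (by omega)]
      rw [lagS_inr, lagR_inr_pos r v d hd enum _ (by simp)]
      exact congrArg Sum.inr (Fin.ext (by simp))
  · rw [theta_of_ne r v d enum e h]; simp [List.Chain']

lemma flatMap_head? (l : List E) :
    (l.flatMap (thetaEdge r v d enum)).head?.map (lagR r v d hd enum) =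
      l.head?.map (fun e => Sum.inl (r e)) := by
  cases l with
  | nil => simp
  | cons e t =>
    rw [List.flatMap_cons, List.head?_append]
    rw [List.head?_eq_head (theta_ne_nil r v d hd enum e)]
    simp only [Option.or_some, List.head?_cons, Option.map_some]
    have := theta_head? r v d hd enum e
    rw [List.head?_eq_head (theta_ne_nil r v d hd enum e)] at this
    simpa using this

lemma flatMap_ne_nil (l : List E) (hl : l ≠ []) :
    l.flatMap (thetaEdge r v d enum) ≠ [] := by
  cases l with
  | nil => simp at hl
  | cons e t =>
    rw [List.flatMap_cons]
    intro hcon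
    exact theta_ne_nil r v d hd enum e (List.append_eq_nil_iff.mp hcon).1

lemma flatMap_getLast? (l : List E) :
    (l.flatMap (thetaEdge r v d enum)).getLast?.map (lagS (d := d) s) =
      l.getLast?.map (fun e => Sum.inl (s e)) := by
  induction l with
  | nil => simp
  | cons e t ih =>
    rw [List.flatMap_cons]
    cases t with
    | nil => simp [theta_getLast? r v d hd enum e, lagS]
    | cons f t' =>
      rw [List.getLast?_append_of_ne_nil _ (flatMap_ne_nil r v d hd enum _ (by simp))]
      rw [ih]
      simp [List.getLast?_cons_cons]

lemma theta_decode (l : List E) :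
    (l.flatMap (thetaEdge r v d enum)).filterMap Sum.getLeft? = l := by
  induction l with
  | nil => simp
  | cons e t ih =>
    rw [List.flatMap_cons, List.filterMap_append, ih]
    have hnil : ∀ (m : List (Fin (d - 2))),
        (m.map (Sum.inr : Fin (d - 2) → E ⊕ Fin (d - 2))).filterMap Sum.getLeft? = [] := by
      intro m
      rw [List.filterMap_eq_nil_iff]
      intro a ha
      obtain ⟨y, -, rfl⟩ := List.mem_map.mp ha
      rfl
    by_cases h : r e = v
    · rw [theta_of_eq r v d enum e h, List.filterMap_append, hnil]
      simp
    · rw [theta_of_ne r v d enum e h]; simp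

lemma theta_drop_last (e : E) (h : r e = v) (i : ℕ)
    (hi1 : i + 1 = min (enum ⟨e, h⟩).val (d - 2)) (hid : i < d - 2) :
    (thetaEdge r v d enum e).drop i = [Sum.inr ⟨i, hid⟩, Sum.inl e] := by
  have hlen : (thetaEdge r v d enum e).length = min (enum ⟨e, h⟩).val (d - 2) + 1 :=
    theta_length r v d hd enum e h
  rw [List.drop_eq_getElem_cons (by omega)]
  rw [theta_getElem r v d hd enum e h i (by omega) hid (by omega)]
  rw [List.drop_eq_getElem_cons (by omega)]
  rw [theta_getElem_last r v d hd enum e h (i + 1) hi1 (by omega)]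
  rw [List.drop_eq_nil_of_le (by omega)]

lemma peel :
    ∀ (m : List (E ⊕ Fin (d - 2))) (i : ℕ) (hi : i < d - 2),
    List.Chain' (fun x y => lagS s x = lagR r v d hd enum y) (Sum.inr ⟨i, hi⟩ :: m) →
    (∀ a ∈ (Sum.inr ⟨i, hi⟩ :: m).getLast?.map (lagS (d := d) s), a.isLeft = true) →
    ∃ (e : {e : E // r e = v}) (rest : List (E ⊕ Fin (d - 2))),
      i < min (enum e).val (d - 2) ∧
      Sum.inr ⟨i, hi⟩ :: m = (thetaEdge r v d enum e.val).drop i ++ rest := by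
  intro m
  induction m with
  | nil =>
    intro i hi _ hlast
    exfalso
    have := hlast (Sum.inr ⟨i, hi⟩) (by simp [lagS_inr])
    simp at this
  | cons y m' ih =>
    intro i hi hchain hlast
    have hR : lagS (d := d) s (Sum.inr ⟨i, hi⟩) = lagR r v d hd enum y :=
      (List.isChain_cons_cons.mp hchain).1
    rw [lagS_inr] at hR
    cases y with
    | inl e =>
      by_cases h : r e = v
      · by_cases h0 : (enum ⟨e, h⟩).val = 0
        · rw [lagR_inl_zero r v d hd enum e h h0] at hR
          exact absurd hR (by simp)
        · by_cases h1 : (enum ⟨e, h⟩).val = d - 1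
          · rw [lagR_inl_top r v d hd enum e h h1] at hR
            have hival : i = d - 3 := by
              have := Sum.inr.inj hR
              simpa using congrArg Fin.val this
            refine ⟨⟨e, h⟩, m', by omega, ?_⟩
            rw [theta_drop_last r v d hd enum e h i (by omega) hi]
            rfl
          · rw [lagR_inl_mid r v d hd enum e h h0 h1] at hR
            have hival : i = (enum ⟨e, h⟩).val - 1 := by
              have := Sum.inr.inj hR
              simpa using congrArg Fin.val this
            have hle : (enum ⟨e, h⟩).val < d - 1 := by
              have := (enum ⟨e, h⟩).isLt; omega
            refine ⟨⟨e, h⟩, m', by omega, ?_⟩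
            rw [theta_drop_last r v d hd enum e h i (by omega) hi]
            rfl
      · rw [lagR_inl_ne r v d hd enum e h] at hR
        exact absurd hR (by simp)
    | inr i' =>
      by_cases h0 : i'.val = 0
      · rw [lagR_inr_zero r v d hd enum i' h0] at hR
        exact absurd hR (by simp)
      · rw [lagR_inr_pos r v d hd enum i' h0] at hR
        have hival : i = i'.val - 1 := by
          have := Sum.inr.inj hR
          simpa using congrArg Fin.val this
        have hi'eq : i' = ⟨i + 1, by have := i'.isLt; omega⟩ :=
          Fin.ext (show i'.val = i + 1 by omega)
        rw [hi'eq] at hchain hlast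
        obtain ⟨e, rest, hlt, heq⟩ := ih (i + 1) (by have := i'.isLt; omega)
          (List.isChain_cons_cons.mp hchain).2
          (by intro a ha; exact hlast a (by rw [List.getLast?_cons_cons]; exact ha))
        refine ⟨e, rest, by omega, ?_⟩
        have hlen := theta_length r v d hd enum e.val e.prop
        simp only [Subtype.coe_eta] at hlen
        rw [List.drop_eq_getElem_cons (l := thetaEdge r v d enum e.val) (by omega)]
        rw [theta_getElem r v d hd enum e.val e.prop i
          (by simp only [Subtype.coe_eta]; omega) hi (by omega)]
        rw [hi'eq, heq]
        rfl

lemma flatMap_chain' (l : List E) (hl : List.Chain' (fun e f => s e = r f) l) :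
    List.Chain' (fun x y => lagS s x = lagR r v d hd enum y)
      (l.flatMap (thetaEdge r v d enum)) := by
  induction l with
  | nil => simp [List.Chain']
  | cons e t ih =>
    rw [List.flatMap_cons]
    unfold List.Chain'
    rw [List.isChain_append]
    refine ⟨theta_chain' r s v d hd enum e, ih hl.tail, ?_⟩
    intro x hx y hy
    rw [theta_getLast? r v d hd enum e] at hx
    obtain rfl : Sum.inl e = x := by simpa using hx
    cases t with
    | nil => simp at hy
    | cons f t' =>
      have h1 := flatMap_head? r v d hd enum (f :: t')
      rw [Option.mem_def] at hy
      rw [hy] at h1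
      simp only [List.head?_cons, Option.map_some] at h1
      rw [lagS_inl, Option.some.injEq] at *
      rw [h1]
      exact congrArg Sum.inl (List.isChain_cons_cons.mp hl).1

lemma main_surj :
    ∀ (n : ℕ) (m : List (E ⊕ Fin (d - 2))), m.length ≤ n →
    List.Chain' (fun x y => lagS s x = lagR r v d hd enum y) m →
    (∀ a ∈ m.head?.map (lagR r v d hd enum), a.isLeft = true) →
    (∀ a ∈ m.getLast?.map (lagS (d := d) s), a.isLeft = true) →
    ∃ l : List E, List.Chain' (fun e f => s e = r f) l ∧
      l.flatMap (thetaEdge r v d enum) = m := by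
  intro n
  induction n with
  | zero =>
    intro m hm _ _ _
    have : m = [] := List.length_eq_zero_iff.mp (Nat.le_zero.mp hm)
    exact ⟨[], List.isChain_nil, by simp [this]⟩
  | succ n ih =>
    intro m hmlen hchain hhead hlast
    cases m with
    | nil => exact ⟨[], List.isChain_nil, by simp⟩
    | cons x m₀ =>
      have key : ∃ (e : E) (rest : List (E ⊕ Fin (d - 2))),
          x :: m₀ = thetaEdge r v d enum e ++ rest := by
        cases x with
        | inl e =>
          have hL : (lagR r v d hd enum (Sum.inl e)).isLeft = true := hhead _ (by simp)
          by_cases h : r e = v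
          · by_cases h0 : (enum ⟨e, h⟩).val = 0
            · exact ⟨e, m₀, by rw [theta_of_eq r v d enum e h, h0]; simp⟩
            · exfalso
              by_cases h1 : (enum ⟨e, h⟩).val = d - 1
              · rw [lagR_inl_top r v d hd enum e h h1] at hL; simp at hL
              · rw [lagR_inl_mid r v d hd enum e h h0 h1] at hL; simp at hL
          · exact ⟨e, m₀, by rw [theta_of_ne r v d enum e h]; simp⟩
        | inr i =>
          have hL : (lagR r v d hd enum (Sum.inr i)).isLeft = true := hhead _ (by simp)
          have hi0 : i.val = 0 := by
            by_contra h0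
            rw [lagR_inr_pos r v d hd enum i h0] at hL; simp at hL
          have hieq : i = ⟨0, by omega⟩ := Fin.ext hi0
          rw [hieq] at hchain hlast
          obtain ⟨e, rest, hlt, heq⟩ := peel r s v d hd enum m₀ 0 (by omega) hchain hlast
          rw [List.drop_zero] at heq
          exact ⟨e.val, rest, by rw [hieq, heq]⟩
      obtain ⟨e, rest, hm⟩ := key
      rw [hm] at hchain hlast hmlen ⊢
      obtain ⟨hc1, hc2, hc3⟩ := List.isChain_append.mp hchain
      have hjunction : ∀ y ∈ rest.head?, lagR r v d hd enum y = Sum.inl (s e) := by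
        intro y hy
        have := hc3 (Sum.inl e) (by rw [theta_getLast? r v d hd enum e]; rfl) y hy
        rw [lagS_inl] at this
        exact this.symm
      have hrestlen : rest.length ≤ n := by
        rw [List.length_append] at hmlen
        have := List.length_pos_iff.mpr (theta_ne_nil r v d hd enum e)
        omega
      have hresthead : ∀ a ∈ rest.head?.map (lagR r v d hd enum), a.isLeft = true := by
        intro a ha
        obtain ⟨y, hy, rfl⟩ := Option.map_eq_some_iff.mp ha
        rw [hjunction y hy]
        rfl
      have hrestlast : ∀ a ∈ rest.getLast?.map (lagS (d := d) s), a.isLeft = true := by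
        intro a ha
        rcases List.eq_nil_or_concat rest with hrnil | ⟨r', b, rfl⟩
        · rw [hrnil] at ha; simp at ha
        · apply hlast
          rw [List.getLast?_append_of_ne_nil _ (by simp)]
          exact ha
      obtain ⟨l', hcl', hfl'⟩ := ih rest hrestlen hc2 hresthead hrestlast
      refine ⟨e :: l', ?_, by rw [List.flatMap_cons, hfl']⟩
      unfold List.Chain'
      rw [List.isChain_cons]
      refine ⟨?_, hcl'⟩
      intro f hf
      have h1 := flatMap_head? r v d hd enum l'
      rw [hfl', Option.mem_def.mp hf] at h1
      simp only [Option.map_some] at h1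
      obtain ⟨y, hy, hy2⟩ := Option.map_eq_some_iff.mp h1
      have := (hjunction y hy).symm.trans hy2
      exact Sum.inl.inj this

end Aux

theorem stmt_14 {V E : Type*} [Finite V] [Finite E] (r s : E → V)
    (htrans : ∀ v w : V, ∃ l : List E,
      List.Chain' (fun e f => s e = r f) l ∧
        l.head?.map r = some w ∧ l.getLast?.map s = some v)
    (hdeg2 : ∀ w : V, 2 ≤ Nat.card {e : E // r e = w})
    (v : V) (d : ℕ) (hd : 3 ≤ d)
    (hdv : Nat.card {e : E // r e = v} = d)
    (enum : {e : E // r e = v} ≃ Fin d) :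
    Set.BijOn (fun l : List E => l.flatMap (thetaEdge r v d enum))
      {l : List E | List.Chain' (fun e f => s e = r f) l}
      {m : List (E ⊕ Fin (d - 2)) |
        List.Chain' (fun x y => lagS s x = lagR r v d hd enum y) m ∧
        (∀ a ∈ m.head?.map (lagR r v d hd enum), a.isLeft = true) ∧
        (∀ a ∈ m.getLast?.map (lagS s), a.isLeft = true)} := by
  refine ⟨?_, ?_, ?_⟩
  · intro l hl
    refine ⟨flatMap_chain' r s v d hd enum l hl, ?_, ?_⟩
    · intro a ha
      rw [flatMap_head? r v d hd enum l] at ha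
      obtain ⟨e, -, rfl⟩ := Option.map_eq_some_iff.mp (Option.mem_def.mp ha)
      rfl
    · intro a ha
      rw [flatMap_getLast? r s v d hd enum l] at ha
      obtain ⟨e, -, rfl⟩ := Option.map_eq_some_iff.mp (Option.mem_def.mp ha)
      rfl
  · intro l1 _ l2 _ heq
    have := congrArg (List.filterMap Sum.getLeft?) heq
    simpa [theta_decode r v d hd enum] using this
  · intro m hm
    obtain ⟨hchain, hhead, hlast⟩ := hm
    obtain ⟨l, hcl, hfl⟩ :=
      main_surj r s v d hd enum m.length m le_rfl hchain hhead hlast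
    exact ⟨l, hcl, hfl⟩
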